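/- If a dagger category C has dagger equalizers and dagger products of all ℕ-indexed families of objects, then C is indiscrete: every hom-set C(A, B) contains exactly one morphism. -/
import Mathlib


open CategoryTheory

universe v u v₁ u₁ v₂ u₂

class DaggerCategory (C : Type u) [Category.{v} C] where
  dag : ∀ {A B : C}, (A ⟶ B) → (B ⟶ A)
  dag_id : ∀ (A : C), dag (𝟙 A) = 𝟙 A
  dag_comp : ∀ {A B X : C} (f : A ⟶ B) (g : B ⟶ X), dag (f ≫ g) = dag g ≫ dag f
  dag_dag : ∀ {A B : C} (f : A ⟶ B), dag (dag f) = f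

postfix:max "†" => DaggerCategory.dag

section Defs

variable {C : Type u} [Category.{v} C] [DaggerCategory C]

/-- A morphism `f` is a partial isometry if `f ∘ f† ∘ f = f`. -/
def IsPartialIsometry {A B : C} (f : A ⟶ B) : Prop :=
  f ≫ f† ≫ f = f

/-- A morphism `f : A ⟶ B` is unitary if `f† ∘ f = 𝟙 A` and `f ∘ f† = 𝟙 B`. -/
def IsUnitary {A B : C} (f : A ⟶ B) : Prop :=
  f ≫ f† = 𝟙 A ∧ f† ≫ f = 𝟙 B

/-- A morphism `f` is dagger monic (an isometry) if `f† ∘ f = 𝟙`. -/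
def DaggerMonic {A B : C} (f : A ⟶ B) : Prop :=
  f ≫ f† = 𝟙 A

/-- `(L, l)` is a limit cone over the diagram `D`. -/
def IsLimitCone {J : Type u₁} [Category.{v₁} J] (D : J ⥤ C) (L : C)
    (l : ∀ j : J, L ⟶ D.obj j) : Prop :=
  (∀ {j j' : J} (f : j ⟶ j'), l j ≫ D.map f = l j') ∧
  (∀ (M : C) (m : ∀ j : J, M ⟶ D.obj j),
    (∀ {j j' : J} (f : j ⟶ j'), m j ≫ D.map f = m j') →
    ∃! g : M ⟶ L, ∀ j : J, g ≫ l j = m j)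

/-- A class of objects `Ω` is weakly initial when every object admits a morphism
from some member of `Ω`. -/
def WeaklyInitial {J : Type u₁} [Category.{v₁} J] (Ω : Set J) : Prop :=
  ∀ B : J, ∃ A ∈ Ω, Nonempty (A ⟶ B)

/-- `(L, l)` is a dagger limit of `(D, Ω)`: a limit cone whose legs at `Ω` are
partial isometries with pairwise commuting induced projections. -/
def IsDaggerLimit {J : Type u₁} [Category.{v₁} J] (D : J ⥤ C) (Ω : Set J) (L : C)
    (l : ∀ j : J, L ⟶ D.obj j) : Prop :=
  IsLimitCone D L l ∧
  (∀ j ∈ Ω, IsPartialIsometry (l j)) ∧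
  (∀ j ∈ Ω, ∀ j' ∈ Ω,
    (l j ≫ (l j)†) ≫ (l j' ≫ (l j')†) = (l j' ≫ (l j')†) ≫ (l j ≫ (l j)†))

end Defs

section MoreDefs

variable {C : Type u} [Category.{v} C] [DaggerCategory C]

/-- `e : E ⟶ A` is an equalizer of the parallel pair `f, g : A ⟶ B`. -/
def IsEqualizer {E A B : C} (e : E ⟶ A) (f g : A ⟶ B) : Prop :=
  e ≫ f = e ≫ g ∧
  ∀ {X : C} (h : X ⟶ A), h ≫ f = h ≫ g → ∃! k : X ⟶ E, k ≫ e = h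

/-- `C` has dagger equalizers: every parallel pair has an equalizer that is dagger monic. -/
def HasDaggerEqualizers (C : Type u) [Category.{v} C] [DaggerCategory C] : Prop :=
  ∀ {A B : C} (f g : A ⟶ B), ∃ (E : C) (e : E ⟶ A), IsEqualizer e f g ∧ DaggerMonic e

/-- `(P, p, q)` is a dagger pullback of the cospan `f : A ⟶ X`, `g : B ⟶ X`: a pullback whose
legs to the feet are partial isometries with commuting induced projections. -/
def IsDaggerPullback {P A B X : C} (p : P ⟶ A) (q : P ⟶ B) (f : A ⟶ X) (g : B ⟶ X) : Prop :=
  p ≫ f = q ≫ g ∧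
  (∀ {Y : C} (a : Y ⟶ A) (b : Y ⟶ B), a ≫ f = b ≫ g →
    ∃! k : Y ⟶ P, k ≫ p = a ∧ k ≫ q = b) ∧
  IsPartialIsometry p ∧ IsPartialIsometry q ∧
  (p ≫ p†) ≫ (q ≫ q†) = (q ≫ q†) ≫ (p ≫ p†)

/-- `C` has dagger pullbacks. -/
def HasDaggerPullbacks (C : Type u) [Category.{v} C] [DaggerCategory C] : Prop :=
  ∀ {A B X : C} (f : A ⟶ X) (g : B ⟶ X),
    ∃ (P : C) (p : P ⟶ A) (q : P ⟶ B), IsDaggerPullback p q f g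

/-- `(P, p)` is a dagger product of the family `A`: a product whose projections are partial
isometries with pairwise commuting induced projections. -/
def IsDaggerProduct {ι : Type u₁} (A : ι → C) (P : C) (p : ∀ i, P ⟶ A i) : Prop :=
  (∀ {Y : C} (a : ∀ i, Y ⟶ A i), ∃! k : Y ⟶ P, ∀ i, k ≫ p i = a i) ∧
  (∀ i, IsPartialIsometry (p i)) ∧
  (∀ i i', (p i ≫ (p i)†) ≫ (p i' ≫ (p i')†) = (p i' ≫ (p i')†) ≫ (p i ≫ (p i)†))

end MoreDefs

/-! ### Auxiliary machinery for the degeneracy theorem -/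

section DegenAux

variable {C : Type u} [Category.{v} C] [DaggerCategory C]

@[simp] lemma ddag_id (A : C) : (𝟙 A)† = 𝟙 A := DaggerCategory.dag_id A

@[simp] lemma ddag_comp {A B X : C} (f : A ⟶ B) (g : B ⟶ X) : (f ≫ g)† = g† ≫ f† :=
  DaggerCategory.dag_comp f g

@[simp] lemma ddag_ddag {A B : C} (f : A ⟶ B) : (f†)† = f := DaggerCategory.dag_dag f

lemma ddag_inj {A B : C} {f g : A ⟶ B} (h : f† = g†) : f = g := by
  have h2 := congrArg (fun t => t†) h
  simpa using h2

/-- Maps into a dagger product are determined by their components. -/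
lemma prod_cols_det {ι : Type u₁} {A : ι → C} {P : C} {p : ∀ i, P ⟶ A i}
    (hp : IsDaggerProduct A P p) {Y : C} {x y : Y ⟶ P}
    (h : ∀ i, x ≫ p i = y ≫ p i) : x = y := by
  obtain ⟨k, -, hu⟩ := hp.1 (fun i => y ≫ p i)
  rw [hu x h, hu y (fun i => rfl)]

/-- Maps out of a dagger product are determined by precomposition with the `(p i)†`. -/
lemma prod_rows_det {ι : Type u₁} {A : ι → C} {P : C} {p : ∀ i, P ⟶ A i}
    (hp : IsDaggerProduct A P p) {W : C} {x y : P ⟶ W}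
    (h : ∀ i, (p i)† ≫ x = (p i)† ≫ y) : x = y := by
  apply ddag_inj
  apply prod_cols_det hp
  intro i
  have h2 := congrArg (fun t => t†) (h i)
  simpa using h2

/-- Every hom-set is nonempty. -/
lemma nonempty_hom_aux
    (hprod : ∀ A : ℕ → C, ∃ (P : C) (p : ∀ n, P ⟶ A n), IsDaggerProduct A P p)
    (X Y : C) : Nonempty (X ⟶ Y) := by
  obtain ⟨P, p, hp⟩ := hprod (fun n => Nat.casesOn n X (fun _ => Y))
  exact ⟨(p 0)† ≫ p 1⟩

/-- A bundle of zero morphisms. -/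
structure DegenZero (C : Type u) [Category.{v} C] [DaggerCategory C] where
  z : ∀ X Y : C, X ⟶ Y
  comp_z : ∀ {X Y W : C} (f : X ⟶ Y), f ≫ z Y W = z X W
  z_comp : ∀ {X Y W : C} (f : Y ⟶ W), z X Y ≫ f = z X W
  dag_z : ∀ (X Y : C), (z X Y)† = z Y X

/-- From one object we build a zero object, hence a system of zero morphisms. -/
lemma exists_degenZero (heq : HasDaggerEqualizers C)
    (hprod : ∀ A : ℕ → C, ∃ (P : C) (p : ∀ n, P ⟶ A n), IsDaggerProduct A P p)
    (A : C) : Nonempty (DegenZero C) := by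
  classical
  obtain ⟨P, p, hp⟩ := hprod (fun _ => A)
  have pi1 : p 1 ≫ (p 1)† ≫ p 1 = p 1 := hp.2.1 1
  have comm : (p 0 ≫ (p 0)†) ≫ (p 1 ≫ (p 1)†) = (p 1 ≫ (p 1)†) ≫ (p 0 ≫ (p 0)†) :=
    hp.2.2 0 1
  have main : ∀ (X : C) (a h : X ⟶ A),
      a ≫ ((p 0)† ≫ p 1) = h ≫ (p 1)† ≫ p 0 ≫ (p 0)† ≫ p 1 := by
    intro X a h
    obtain ⟨x, hx, -⟩ := hp.1 (fun n => Nat.casesOn n a (fun _ => h))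
    have hx0 : x ≫ p 0 = a := hx 0
    have hx1 : x ≫ p 1 = h := hx 1
    have e1 := congrArg (fun t => x ≫ t ≫ p 1) comm
    simp only [Category.assoc] at e1
    rw [pi1] at e1
    rw [← hx0, ← hx1]
    simp only [Category.assoc]
    exact e1
  have key : ∀ (X : C) (a a' : X ⟶ A),
      a ≫ ((p 0)† ≫ p 1) = a' ≫ ((p 0)† ≫ p 1) := by
    intro X a a'
    rw [main X a a, main X a' a]
  have gidem : ((p 0)† ≫ p 1) ≫ ((p 0)† ≫ p 1) = (p 0)† ≫ p 1 := by
    have h := key A ((p 0)† ≫ p 1) (𝟙 A)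
    simpa using h
  obtain ⟨T, t, ht, -⟩ := heq ((p 0)† ≫ p 1) (𝟙 A)
  have ht1 : t ≫ ((p 0)† ≫ p 1) = t := by
    have h := ht.1; simpa using h
  have soluni : ∀ (X : C) (c c' : X ⟶ A),
      c ≫ ((p 0)† ≫ p 1) = c → c' ≫ ((p 0)† ≫ p 1) = c' → c = c' := by
    intro X c c' hc hc'
    rw [← hc, ← hc', key X c c']
  have hTne : ∀ X : C, Nonempty (X ⟶ T) := by
    intro X
    obtain ⟨a⟩ := nonempty_hom_aux hprod X A
    have hc : (a ≫ ((p 0)† ≫ p 1)) ≫ ((p 0)† ≫ p 1) = a ≫ ((p 0)† ≫ p 1) := by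
      rw [Category.assoc, gidem]
    obtain ⟨k, -, -⟩ := ht.2 (a ≫ ((p 0)† ≫ p 1)) (by simpa using hc)
    exact ⟨k⟩
  have hTsub : ∀ (X : C) (k k' : X ⟶ T), k = k' := by
    intro X k k'
    have h1 : (k ≫ t) ≫ ((p 0)† ≫ p 1) = k ≫ t := by
      rw [Category.assoc, ht1]
    have h2 : (k' ≫ t) ≫ ((p 0)† ≫ p 1) = k' ≫ t := by
      rw [Category.assoc, ht1]
    have hkk : k ≫ t = k' ≫ t := soluni X _ _ h1 h2
    obtain ⟨m, -, hmu⟩ := ht.2 (k ≫ t) (by simpa using h1)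
    rw [hmu k rfl, hmu k' hkk.symm]
  let tau : ∀ X : C, X ⟶ T := fun X => Classical.choice (hTne X)
  refine ⟨⟨fun X Y => tau X ≫ (tau Y)†, ?_, ?_, ?_⟩⟩
  · intro X Y W f
    have h : f ≫ tau Y = tau X := hTsub X _ _
    rw [← Category.assoc, h]
  · intro X Y W f
    have h1 : (tau Y)† ≫ f = (tau W)† := by
      apply ddag_inj
      simp only [ddag_comp, ddag_ddag]
      exact hTsub W _ _
    rw [Category.assoc, h1]
  · intro X Y
    simp

/-! Pairing function helpers. -/

private def pFst (j : ℕ) : ℕ := (Nat.pairEquiv.symm j).1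
private def pSnd (j : ℕ) : ℕ := (Nat.pairEquiv.symm j).2
private def pPair (n k : ℕ) : ℕ := Nat.pairEquiv (k, n)

private lemma pFst_pPair (n k : ℕ) : pFst (pPair n k) = k := by
  simp [pFst, pPair]

private lemma pSnd_pPair (n k : ℕ) : pSnd (pPair n k) = n := by
  simp [pSnd, pPair]

private lemma pPair_eta (j : ℕ) : pPair (pSnd j) (pFst j) = j := by
  simp only [pFst, pSnd, pPair, Nat.pairEquiv, Equiv.coe_fn_mk, Equiv.coe_fn_symm_mk]
  exact Nat.pair_unpair j

private lemma pPair_injective (n : ℕ) : Function.Injective (pPair n) := by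
  intro k k' hh
  have h := congrArg pFst hh
  rwa [pFst_pPair, pFst_pPair] at h

private lemma pPair_ne {n m : ℕ} (h : n ≠ m) (k k' : ℕ) : pPair n k ≠ pPair m k' := by
  intro hh
  have h2 := congrArg pSnd hh
  rw [pSnd_pPair, pSnd_pPair] at h2
  exact h h2

/-- The heart of the argument: every identity is a zero morphism. -/
lemma id_eq_zero_aux (heq : HasDaggerEqualizers C)
    (hprod : ∀ A : ℕ → C, ∃ (P : C) (p : ∀ n, P ⟶ A n), IsDaggerProduct A P p)
    (Z : DegenZero C) (B : C) : 𝟙 B = Z.z B B := by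
  classical
  obtain ⟨P, p, hp⟩ := hprod (fun _ => B)
  obtain ⟨d, hd, -⟩ := hp.1 (fun _ => 𝟙 B)
  -- normalization : the projections are coisometries
  have hnorm : ∀ n, (p n)† ≫ p n = 𝟙 B := by
    intro n
    obtain ⟨u, hu, -⟩ := hp.1 (fun m => if m = n then 𝟙 B else Z.z B B)
    have hun : u ≫ p n = 𝟙 B := by simpa using hu n
    have pin : p n ≫ (p n)† ≫ p n = p n := hp.2.1 n
    calc (p n)† ≫ p n = ((u ≫ p n) ≫ (p n)†) ≫ p n := by rw [hun]; simp
      _ = u ≫ (p n ≫ (p n)† ≫ p n) := by simp only [Category.assoc]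
      _ = u ≫ p n := by rw [pin]
      _ = 𝟙 B := hun
  -- orthogonality
  have horth : ∀ m n, m ≠ n → (p m)† ≫ p n = Z.z B B := by
    intro m n hmn
    obtain ⟨u, hu, -⟩ := hp.1 (fun j => if j = m then 𝟙 B else Z.z B B)
    have hum : u ≫ p m = 𝟙 B := by simpa using hu m
    have hun : u ≫ p n = Z.z B B := by
      have h := hu n
      rwa [if_neg (by omega : ¬ n = m)] at h
    have pin : p n ≫ (p n)† ≫ p n = p n := hp.2.1 n
    have e1 := congrArg (fun t => u ≫ t ≫ p n) (hp.2.2 m n)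
    simp only [Category.assoc] at e1
    rw [pin] at e1
    have lhs : u ≫ p m ≫ (p m)† ≫ p n = (p m)† ≫ p n := by
      rw [← Category.assoc, hum, Category.id_comp]
    have rhs : u ≫ p n ≫ (p n)† ≫ p m ≫ (p m)† ≫ p n = Z.z B B := by
      rw [← Category.assoc, hun, Z.z_comp]
    rw [lhs, rhs] at e1
    exact e1
  have hdelta : ∀ m n, (p m)† ≫ p n = if m = n then 𝟙 B else Z.z B B := by
    intro m n
    by_cases h : m = n
    · subst h; rw [if_pos rfl]; exact hnorm m
    · rw [if_neg h]; exact horth m n h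
  -- partial shuffles V σ
  have hVex : ∀ σ : ℕ → ℕ, ∃ V : P ⟶ P, ∀ m, V ≫ p m = p (σ m) :=
    fun σ => (hp.1 (fun m => p (σ m))).exists
  choose V hV using hVex
  have hrowV : ∀ (σ : ℕ → ℕ) (i : ℕ), (p i)† ≫ (V σ)† = (p (σ i))† := by
    intro σ i
    rw [← ddag_comp, hV σ i]
  have hcolV_in : ∀ (σ : ℕ → ℕ), Function.Injective σ → ∀ k, (V σ)† ≫ p (σ k) = p k := by
    intro σ hσ k
    apply prod_rows_det hp
    intro i
    rw [← Category.assoc, hrowV, hdelta, hdelta]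
    by_cases h : i = k
    · subst h; rw [if_pos rfl, if_pos rfl]
    · rw [if_neg (fun hh => h (hσ hh)), if_neg h]
  have hcolV_out : ∀ (σ : ℕ → ℕ) (j : ℕ), (∀ k, σ k ≠ j) → (V σ)† ≫ p j = Z.z P B := by
    intro σ j hj
    apply prod_rows_det hp
    intro i
    rw [← Category.assoc, hrowV, hdelta, if_neg (hj i), Z.comp_z]
  have hVV_in : ∀ (σ : ℕ → ℕ), Function.Injective σ → (V σ)† ≫ V σ = 𝟙 P := by
    intro σ hσ
    apply prod_rows_det hp
    intro i
    apply prod_cols_det hp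
    intro m
    simp only [Category.assoc, Category.comp_id]
    rw [hV σ m, hcolV_in σ hσ m]
  have hVV_disj : ∀ (σ σ' : ℕ → ℕ), (∀ k k', σ k ≠ σ' k') → (V σ)† ≫ V σ' = Z.z P P := by
    intro σ σ' hdis
    apply prod_rows_det hp
    intro i
    apply prod_cols_det hp
    intro m
    simp only [Category.assoc]
    rw [hV σ' m, ← Category.assoc, hrowV, hdelta, if_neg (hdis i m), Z.z_comp, Z.comp_z]
  -- the "transpose collapse" map Tm
  obtain ⟨Tm, hTm, -⟩ := hp.1 (fun j => p (pSnd j))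
  have hxn : ∀ n, (p n)† ≫ Tm = d ≫ (V (pPair n))† := by
    intro n
    apply prod_cols_det hp
    intro j
    rw [Category.assoc, hTm j, hdelta, Category.assoc]
    by_cases h : pSnd j = n
    · rw [if_pos h.symm]
      have hj : pPair n (pFst j) = j := by rw [← h]; exact pPair_eta j
      rw [← hj, hcolV_in (pPair n) (pPair_injective n) (pFst j), hd]
    · rw [if_neg (fun hh => h hh.symm)]
      have hout : ∀ k, pPair n k ≠ j := by
        intro k hk
        exact h (by rw [← hk, pSnd_pPair])
      rw [hcolV_out (pPair n) j hout, Z.comp_z]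
  obtain ⟨M, hM, -⟩ := hp.1 (fun n => p n ≫ (d ≫ d†))
  have hTmTm : Tm ≫ Tm† = M := by
    apply prod_rows_det hp
    intro n
    apply prod_cols_det hp
    intro m
    have h1 : Tm† ≫ p m = V (pPair m) ≫ d† := by
      apply ddag_inj
      simp only [ddag_comp, ddag_ddag]
      exact hxn m
    have lhs : ((p n)† ≫ (Tm ≫ Tm†)) ≫ p m
        = d ≫ ((V (pPair n))† ≫ V (pPair m)) ≫ d† := by
      calc ((p n)† ≫ (Tm ≫ Tm†)) ≫ p m
          = ((p n)† ≫ Tm) ≫ (Tm† ≫ p m) := by simp only [Category.assoc]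
        _ = (d ≫ (V (pPair n))†) ≫ (V (pPair m) ≫ d†) := by rw [hxn n, h1]
        _ = d ≫ ((V (pPair n))† ≫ V (pPair m)) ≫ d† := by simp only [Category.assoc]
    have rhs : ((p n)† ≫ M) ≫ p m = (if n = m then 𝟙 B else Z.z B B) ≫ (d ≫ d†) := by
      rw [Category.assoc, hM m, ← Category.assoc, hdelta]
    rw [lhs, rhs]
    by_cases h : n = m
    · subst h
      rw [hVV_in (pPair n) (pPair_injective n), if_pos rfl]
      simp
    · rw [hVV_disj _ _ (pPair_ne h), if_neg h]
      simp only [Z.z_comp, Z.comp_z]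
  have hdTm : d ≫ Tm = d := by
    apply prod_cols_det hp
    intro j
    rw [Category.assoc, hTm j, hd, hd]
  have hdM : d ≫ M = (d ≫ d†) ≫ d := by
    apply prod_cols_det hp
    intro n
    have l : (d ≫ M) ≫ p n = 𝟙 B ≫ (d ≫ d†) := by
      rw [Category.assoc, hM n, ← Category.assoc, hd n]
    have r : ((d ≫ d†) ≫ d) ≫ p n = (d ≫ d†) ≫ 𝟙 B := by
      rw [Category.assoc, hd n]
    rw [l, r]
    simp
  have h0 : d ≫ d† = d ≫ (Tm ≫ Tm†) ≫ d† := by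
    conv_lhs => rw [← hdTm]
    simp only [ddag_comp, Category.assoc]
  have hDD : d ≫ d† = (d ≫ d†) ≫ (d ≫ d†) := by
    conv_lhs => rw [h0, hTmTm]
    rw [← Category.assoc, hdM, Category.assoc]
  -- invertibility of d ≫ d† via the dagger equalizer of the shift
  obtain ⟨s, hs, -⟩ := hp.1 (fun n => p (n + 1))
  have hds : d ≫ s = d := by
    apply prod_cols_det hp
    intro n
    rw [Category.assoc, hs n, hd, hd]
  obtain ⟨E, e, heql, hemon⟩ := heq s (𝟙 P)
  have hes : e ≫ s = e := by
    have h := heql.1; simpa using h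
  have hecomp : ∀ n, e ≫ p n = e ≫ p 0 := by
    intro n
    induction n with
    | zero => rfl
    | succ n ih =>
      have h : e ≫ p (n + 1) = e ≫ p n := by
        rw [← hs n, ← Category.assoc, hes]
      rw [h, ih]
  obtain ⟨k, hk, -⟩ := heql.2 d (by rw [Category.comp_id]; exact hds)
  have hkl : k ≫ (e ≫ p 0) = 𝟙 B := by
    rw [← Category.assoc, hk, hd]
  have hefac : e = (e ≫ p 0) ≫ d := by
    apply prod_cols_det hp
    intro n
    rw [hecomp n, Category.assoc, hd n, Category.comp_id]
  have hlk : (e ≫ p 0) ≫ k = 𝟙 E := by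
    obtain ⟨m, -, hmu⟩ := heql.2 e (by rw [Category.comp_id]; exact hes)
    have h1 : ((e ≫ p 0) ≫ k) ≫ e = e := by
      rw [Category.assoc, hk, ← hefac]
    rw [hmu _ h1, hmu (𝟙 E) (by simp)]
  have hDk : d ≫ d† = k ≫ k† := by
    have haux : e ≫ e† ≫ k† = k† := by
      rw [← Category.assoc, (hemon : e ≫ e† = 𝟙 E), Category.id_comp]
    conv_lhs => rw [← hk]
    simp only [ddag_comp, Category.assoc]
    rw [haux]
  have hinv : (d ≫ d†) ≫ ((e ≫ p 0)† ≫ (e ≫ p 0)) = 𝟙 B := by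
    rw [hDk]
    have h2 : k† ≫ (e ≫ p 0)† = 𝟙 E := by
      rw [← ddag_comp, hlk, ddag_id]
    calc (k ≫ k†) ≫ ((e ≫ p 0)† ≫ (e ≫ p 0))
        = k ≫ (k† ≫ (e ≫ p 0)†) ≫ (e ≫ p 0) := by simp only [Category.assoc]
      _ = k ≫ (e ≫ p 0) := by rw [h2, Category.id_comp]
      _ = 𝟙 B := hkl
  have hD1 : d ≫ d† = 𝟙 B := by
    calc d ≫ d†
        = (d ≫ d†) ≫ ((d ≫ d†) ≫ ((e ≫ p 0)† ≫ (e ≫ p 0))) := by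
          rw [hinv, Category.comp_id]
      _ = ((d ≫ d†) ≫ (d ≫ d†)) ≫ ((e ≫ p 0)† ≫ (e ≫ p 0)) := by
          simp only [Category.assoc]
      _ = (d ≫ d†) ≫ ((e ≫ p 0)† ≫ (e ≫ p 0)) := by rw [← hDD]
      _ = 𝟙 B := hinv
  -- the final dagger equalizer: of d† and p 0
  obtain ⟨E', e', heq', hemon'⟩ := heq d† (p 0)
  have fix1 : ∀ {X : C} (x : X ⟶ P), x ≫ d† = x ≫ p 0 → x ≫ (e'† ≫ e') = x := by
    intro X x hx
    obtain ⟨k', hk', -⟩ := heq'.2 x hx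
    calc x ≫ (e'† ≫ e') = k' ≫ (e' ≫ e'†) ≫ e' := by
          rw [← hk']; simp only [Category.assoc]
      _ = k' ≫ e' := by rw [(hemon' : e' ≫ e'† = 𝟙 E'), Category.id_comp]
      _ = x := hk'
  have m1 : (p 0)† ≫ (e'† ≫ e') = (p 0)† := by
    apply fix1
    rw [← ddag_comp, hd 0, ddag_id, hnorm 0]
  have m2 : (e'† ≫ e') ≫ p 0 = p 0 := by
    have h := congrArg (fun t => t†) m1
    simpa using h
  have m3 : (e'† ≫ e') ≫ d† = p 0 := by
    have hstep : (e'† ≫ e') ≫ d† = (e'† ≫ e') ≫ p 0 := by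
      calc (e'† ≫ e') ≫ d† = e'† ≫ (e' ≫ d†) := by simp only [Category.assoc]
        _ = e'† ≫ (e' ≫ p 0) := by rw [heq'.1]
        _ = (e'† ≫ e') ≫ p 0 := by simp only [Category.assoc]
    rw [hstep, m2]
  have m5 : d ≫ (e'† ≫ e') = (p 0)† := by
    have h := congrArg (fun t => t†) m3
    simpa using h
  have m6 : d ≫ (e'† ≫ e') = d := by
    apply fix1
    rw [hD1, hd 0]
  have hdp0 : d = (p 0)† := by rw [← m6, m5]
  have hfin : 𝟙 B = (p 0)† ≫ p 1 := by
    rw [← hdp0, hd 1]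
  rw [hfin, horth 0 1 (by omega)]

end DegenAux


/-- A dagger category with dagger equalizers and dagger products of all
`ℕ`-indexed families of objects is indiscrete: every hom-set contains exactly one morphism. -/
theorem indiscrete_of_daggerEqualizers_natDaggerProducts
    (C : Type u) [Category.{v} C] [DaggerCategory C]
    (heq : HasDaggerEqualizers C)
    (hprod : ∀ A : ℕ → C, ∃ (P : C) (p : ∀ n, P ⟶ A n), IsDaggerProduct A P p) :
    ∀ A B : C, Nonempty (A ⟶ B) ∧ Subsingleton (A ⟶ B) := by
  intro A B
  refine ⟨nonempty_hom_aux hprod A B, ?_⟩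
  obtain ⟨Z⟩ := exists_degenZero heq hprod A
  have hB := id_eq_zero_aux heq hprod Z B
  refine ⟨fun f g => ?_⟩
  calc f = f ≫ 𝟙 B := by simp
    _ = f ≫ Z.z B B := by rw [← hB]
    _ = Z.z A B := Z.comp_z f
    _ = g ≫ Z.z B B := (Z.comp_z g).symm
    _ = g ≫ 𝟙 B := by rw [← hB]
    _ = g := by simp
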